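/- There is no continuous function F, defined on the subspace of Baire space consisting of all p : ℕ → ℕ that enumerate some FSL-instance tree T ⊆ List Bool, with values in Cantor space ℕ → Bool, such that whenever p enumerates such a tree T, F p is a δ_𝒮-name and the word δ_𝒮(F p) is a leaf of T. (In particular, the problem FSL is not computable.) -/

import Mathlib

/-- `p` enumerates the tree `T ⊆ List Bool` (via the injective encoding `code`) if
`T = {w | ∃ k, p k = code w + 1}`. -/
def EnumeratesTree (code : List Bool → ℕ) (p : ℕ → ℕ) (T : Set (List Bool)) : Prop :=
  T = {w | ∃ k, p k = code w + 1}

/-- `w` is a leaf of `T`: it belongs to `T` and has no proper extension in `T`. -/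
def IsLeaf (T : Set (List Bool)) (w : List Bool) : Prop :=
  w ∈ T ∧ ∀ u ∈ T, w <+: u → u = w

/-- `T` is an FSL-instance: a nonempty prefix-closed set of binary words such that every
element has an extension in `T` that is a leaf of `T`. -/
def FSLTree (T : Set (List Bool)) : Prop :=
  T.Nonempty ∧ (∀ w ∈ T, ∀ u, u <+: w → u ∈ T) ∧
    ∀ w ∈ T, ∃ u, w <+: u ∧ IsLeaf T u

/-- The letter contributed by one pair of bits in the representation `δ_𝒮`:
`(true, false)` contributes `false`, `(false, true)` contributes `true`,
`(false, false)` and `(true, true)` contribute nothing. -/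
def pairLetter : Bool → Bool → List Bool
  | true, false => [false]
  | false, true => [true]
  | _, _ => []

/-- The word read off from the first `n` consecutive pairs of `r`. -/
def decodePairs (r : ℕ → Bool) : ℕ → List Bool
  | 0 => []
  | n + 1 => decodePairs r n ++ pairLetter (r (2 * n)) (r (2 * n + 1))

/-- `r` is a `δ_𝒮`-name of the word `w`: all bits from some even position `2n` on are
`false`, and the pairs up to `n` decode to `w`. -/
def DeltaS (r : ℕ → Bool) (w : List Bool) : Prop :=
  ∃ n : ℕ, (∀ k, 2 * n ≤ k → r k = false) ∧ decodePairs r n = w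

/-!
Play against a would-be solver `F`. Keep a finite enumeration `σ` of a finite FSL-instance
on which `F` names a leaf `v`. By continuity, a finite part of `σ` already forces the part of
the output that spells `v`; pad `σ` with zeros beyond that part and then enumerate the two
children of `v`. The tree is still an FSL-instance but `v` is no longer a leaf, so `F` must now
name a child of `v`, and the game repeats. The enumerations converge to an enumeration of an
FSL-instance (an infinite path with a leaf hanging off each node) on which `F` would have to
name a word extending every `v`, although these have unbounded length.
-/

open PiNat

theorem ContinuousOn.exists_cylinder_mapsTo {α β : Type*} [TopologicalSpace α]
    [DiscreteTopology α] [TopologicalSpace β] [DiscreteTopology β]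
    {F : (ℕ → α) → ℕ → β} {S : Set (ℕ → α)} (hF : ContinuousOn F S) {p : ℕ → α} (hp : p ∈ S)
    (N : ℕ) : ∃ M, ∀ q ∈ S, q ∈ cylinder p M → F q ∈ cylinder (F p) N := by
  obtain ⟨U, hU, hpU, hUS⟩ := mem_nhdsWithin.1 <|
    hF p hp ((isOpen_cylinder _ (F p) N).mem_nhds (self_mem_cylinder _ _))
  obtain ⟨_, ⟨x, M, rfl⟩, hpx, hxU⟩ :=
    (isTopologicalBasis_cylinders _).exists_subset_of_mem_open hpU hU
  rw [← mem_cylinder_iff_eq.1 hpx] at hxU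
  exact ⟨M, fun q hq hqM => hUS ⟨hxU hqM, hq⟩⟩

theorem decodePairs_congr {r r' : ℕ → Bool} {n : ℕ} (h : r' ∈ cylinder r (2 * n)) :
    decodePairs r' n = decodePairs r n := by
  induction n with
  | zero => rfl
  | succ n ih =>
    simp only [decodePairs, ih (cylinder_anti _ (by omega) h), h (2 * n) (by omega),
      h (2 * n + 1) (by omega)]

theorem decodePairs_prefix_of_le (r : ℕ → Bool) {m n : ℕ} (h : m ≤ n) :
    decodePairs r m <+: decodePairs r n :=
  Nat.rel_of_forall_rel_succ_of_le (· <+: ·) (fun _ => List.prefix_append _ _) h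

theorem decodePairs_eq_of_le {r : ℕ → Bool} {m n : ℕ} (hr : ∀ k, 2 * m ≤ k → r k = false)
    (h : m ≤ n) : decodePairs r n = decodePairs r m := by
  induction n, h using Nat.le_induction with
  | base => rfl
  | succ n hmn ih =>
    simp only [decodePairs, ih, hr (2 * n) (by omega), hr (2 * n + 1) (by omega), pairLetter,
      List.append_nil]

theorem DeltaS.decodePairs_prefix {r : ℕ → Bool} {w : List Bool} (h : DeltaS r w) (m : ℕ) :
    decodePairs r m <+: w := by
  obtain ⟨n, hr, rfl⟩ := h
  rcases le_total m n with hmn | hnm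
  · exact decodePairs_prefix_of_le r hmn
  · rw [decodePairs_eq_of_le hr hnm]

theorem DeltaS.prefix_of_mem_cylinder {r r' : ℕ → Bool} {w w' : List Bool} {n : ℕ}
    (hw : decodePairs r n = w) (h : r' ∈ cylinder r (2 * n)) (hw' : DeltaS r' w') : w <+: w' :=
  hw ▸ decodePairs_congr h ▸ hw'.decodePairs_prefix n

def extendZero (σ : List ℕ) : ℕ → ℕ := fun i => σ.getD i 0

def listedWords (code : List Bool → ℕ) (σ : List ℕ) : Set (List Bool) := {w | code w + 1 ∈ σ}

theorem mem_of_extendZero_eq {σ : List ℕ} {i m : ℕ} (h : extendZero σ i = m) (hm : m ≠ 0) :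
    m ∈ σ := by
  by_cases hi : i < σ.length
  · rw [extendZero, List.getD_eq_getElem _ _ hi] at h
    exact h ▸ List.getElem_mem hi
  · rw [extendZero, List.getD_eq_default _ _ (not_lt.1 hi)] at h
    exact absurd h.symm hm

theorem exists_extendZero_eq_of_mem {σ : List ℕ} {m : ℕ} (h : m ∈ σ) :
    ∃ i < σ.length, extendZero σ i = m := by
  obtain ⟨i, hi, rfl⟩ := List.getElem_of_mem h
  exact ⟨i, hi, List.getD_eq_getElem _ _ hi⟩

theorem enumeratesTree_extendZero (code : List Bool → ℕ) (σ : List ℕ) :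
    EnumeratesTree code (extendZero σ) (listedWords code σ) := by
  ext w
  exact ⟨fun h => (exists_extendZero_eq_of_mem h).imp fun _ => And.right,
    fun ⟨_, h⟩ => mem_of_extendZero_eq h (code w).succ_ne_zero⟩

theorem extendZero_mem_cylinder {σ τ : List ℕ} (h : σ <+: τ) :
    extendZero τ ∈ cylinder (extendZero σ) σ.length := fun i hi => by
  rw [extendZero, extendZero, List.getD_eq_getElem _ _ hi,
    List.getD_eq_getElem _ _ (hi.trans_le h.length_le), h.getElem hi]

theorem extendZero_append_replicate (σ : List ℕ) (M : ℕ) :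
    extendZero (σ ++ List.replicate M 0) = extendZero σ := by
  ext i
  by_cases hi : i < σ.length
  · exact List.getD_append _ _ _ _ hi
  · rw [extendZero, extendZero, List.getD_append_right _ _ _ _ (not_lt.1 hi),
      List.getD_eq_default _ _ (not_lt.1 hi), List.getD_eq_getElem?_getD,
      List.getElem?_getD_replicate_default_eq]

def limitSeq (σ : ℕ → List ℕ) : ℕ → ℕ := fun i => extendZero (σ (i + 1)) i

theorem limitSeq_mem_cylinder {σ : ℕ → List ℕ} (hσ : ∀ k, σ k <+: σ (k + 1))
    (hlen : StrictMono fun k => (σ k).length) (k : ℕ) :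
    limitSeq σ ∈ cylinder (extendZero (σ k)) (σ k).length := fun i hi => by
  have hmono {k l : ℕ} (h : k ≤ l) : σ k <+: σ l := Nat.rel_of_forall_rel_succ_of_le _ hσ h
  rcases le_total k (i + 1) with h | h
  · exact extendZero_mem_cylinder (hmono h) i hi
  · exact (extendZero_mem_cylinder (hmono h) i (hlen.id_le (i + 1))).symm

theorem enumeratesTree_limitSeq {σ : ℕ → List ℕ} (hσ : ∀ k, σ k <+: σ (k + 1))
    (hlen : StrictMono fun k => (σ k).length) (code : List Bool → ℕ) :
    EnumeratesTree code (limitSeq σ) (⋃ k, listedWords code (σ k)) := by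
  ext w
  simp only [Set.mem_iUnion, Set.mem_ofPred_eq]
  constructor
  · rintro ⟨k, hk⟩
    obtain ⟨i, hi, hik⟩ := exists_extendZero_eq_of_mem hk
    exact ⟨i, limitSeq_mem_cylinder hσ hlen k i hi ▸ hik⟩
  · rintro ⟨i, hi⟩
    exact ⟨i + 1, mem_of_extendZero_eq hi (code w).succ_ne_zero⟩

def sprout (T : Set (List Bool)) (v : List Bool) : Set (List Bool) :=
  T ∪ Set.range fun b : Bool => v ++ [b]

section Sprout

variable {T : Set (List Bool)} {u v w : List Bool}

theorem IsLeaf.sprout_of_ne (hu : IsLeaf T u) (hv : v ∈ T) (huv : u ≠ v) :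
    IsLeaf (sprout T v) u := by
  refine ⟨Or.inl hu.1, ?_⟩
  rintro u' (hu' | ⟨b, rfl⟩) hpre
  · exact hu.2 u' hu' hpre
  · rcases List.prefix_concat_iff.1 hpre with h | h
    · exact h.symm
    · exact absurd (hu.2 v hv h).symm huv

theorem IsLeaf.snoc_sprout (hv : IsLeaf T v) (b : Bool) : IsLeaf (sprout T v) (v ++ [b]) := by
  refine ⟨Or.inr ⟨b, rfl⟩, ?_⟩
  rintro u' (hu' | ⟨c, rfl⟩) hpre
  · obtain rfl := hv.2 u' hu' ((List.prefix_append v [b]).trans hpre)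
    simpa using hpre.length_le
  · exact (hpre.eq_of_length (by simp)).symm

theorem IsLeaf.eq_snoc_of_sprout (hv : IsLeaf T v) (hw : IsLeaf (sprout T v) w)
    (hvw : v <+: w) : ∃ b, w = v ++ [b] := by
  rcases hw.1 with hwT | ⟨b, rfl⟩
  · obtain rfl := hv.2 w hwT hvw
    simpa using hw.2 (w ++ [false]) (Or.inr ⟨false, rfl⟩) (List.prefix_append _ _)
  · exact ⟨b, rfl⟩

theorem FSLTree.sprout (hT : FSLTree T) (hv : IsLeaf T v) : FSLTree (sprout T v) := by
  obtain ⟨hne, hclosed, hleaf⟩ := hT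
  refine ⟨hne.mono Set.subset_union_left, ?_, ?_⟩
  · rintro w (hw | ⟨b, rfl⟩) u hu
    · exact Or.inl (hclosed w hw u hu)
    · rcases List.prefix_concat_iff.1 hu with rfl | h
      · exact Or.inr ⟨b, rfl⟩
      · exact Or.inl (hclosed v hv.1 u h)
  · rintro w (hw | ⟨b, rfl⟩)
    · obtain ⟨u, hwu, hu⟩ := hleaf w hw
      by_cases huv : u = v
      · subst huv
        exact ⟨u ++ [false], hwu.trans (List.prefix_append _ _), hv.snoc_sprout false⟩
      · exact ⟨u, hwu, hu.sprout_of_ne hv.1 huv⟩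
    · exact ⟨v ++ [b], List.prefix_rfl, hv.snoc_sprout b⟩

end Sprout

theorem isLeaf_iUnion_of_forall_ge {T : ℕ → Set (List Bool)} (hT : Monotone T) {u : List Bool}
    {k : ℕ} (hu : ∀ j ≥ k, IsLeaf (T j) u) : IsLeaf (⋃ j, T j) u := by
  refine ⟨Set.mem_iUnion.2 ⟨k, (hu k le_rfl).1⟩, fun u' hu' hpre => ?_⟩
  obtain ⟨i, hi⟩ := Set.mem_iUnion.1 hu'
  exact (hu (max i k) (le_max_right _ _)).2 u' (hT (le_max_left _ _) hi) hpre

theorem fslTree_iUnion_of_sprout {T : ℕ → Set (List Bool)} {v : ℕ → List Bool}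
    (hT0 : FSLTree (T 0)) (hv : ∀ k, IsLeaf (T k) (v k))
    (hT : ∀ k, T (k + 1) = sprout (T k) (v k)) (hvs : ∀ k, ∃ b, v (k + 1) = v k ++ [b]) :
    FSLTree (⋃ k, T k) := by
  have hmono : Monotone T :=
    monotone_nat_of_le_succ fun k => (hT k).symm ▸ Set.subset_union_left
  have hfsl (k : ℕ) : FSLTree (T k) := by
    induction k with
    | zero => exact hT0
    | succ k ih => exact hT k ▸ ih.sprout (hv k)
  have hvmono {k l : ℕ} (h : k ≤ l) : v k <+: v l :=
    Nat.rel_of_forall_rel_succ_of_le (· <+: ·)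
      (fun k => let ⟨_, hb⟩ := hvs k; hb ▸ List.prefix_append _ _) h
  have hstay {k : ℕ} {u : List Bool} (hu : IsLeaf (T k) u) (hne : ∀ j ≥ k, u ≠ v j) :
      IsLeaf (⋃ k, T k) u := by
    refine isLeaf_iUnion_of_forall_ge (k := k) hmono fun j (hj : k ≤ j) => ?_
    induction j, hj using Nat.le_induction with
    | base => exact hu
    | succ j hkj ih => exact hT j ▸ ih.sprout_of_ne (hv j).1 (hne j hkj)
  refine ⟨hT0.1.mono (Set.subset_iUnion T 0), fun w hw u hu => ?_, fun w hw => ?_⟩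
  · obtain ⟨k, hk⟩ := Set.mem_iUnion.1 hw
    exact Set.mem_iUnion.2 ⟨k, (hfsl k).2.1 w hk u hu⟩
  obtain ⟨k, hk⟩ := Set.mem_iUnion.1 hw
  obtain ⟨u, hwu, hu⟩ := (hfsl k).2.2 w hk
  by_cases hsprouted : ∃ j ≥ k, u = v j
  · obtain ⟨j, -, rfl⟩ := hsprouted
    obtain ⟨b, hb⟩ := hvs j
    refine ⟨v j ++ [!b], hwu.trans (List.prefix_append _ _),
      hstay (hT j ▸ (hv j).snoc_sprout _) fun i hi heq => ?_⟩
    have hpre := hvmono hi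
    rw [← heq, hb] at hpre
    simpa using hpre.eq_of_length (by simp)
  · push Not at hsprouted
    exact ⟨u, hwu, hstay hu hsprouted⟩

def fslEnumerations (code : List Bool → ℕ) : Set (ℕ → ℕ) :=
  {p | ∃ T, FSLTree T ∧ EnumeratesTree code p T}

def SolvesFSL (code : List Bool → ℕ) (F : (ℕ → ℕ) → ℕ → Bool) : Prop :=
  ∀ (p : ℕ → ℕ) (T : Set (List Bool)), FSLTree T → EnumeratesTree code p T →
    ∃ w : List Bool, DeltaS (F p) w ∧ IsLeaf T w

theorem fslTree_singleton_nil : FSLTree {[]} :=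
  ⟨Set.singleton_nonempty _, fun _ hw _ hu => List.prefix_nil.1 (hw ▸ hu),
    fun _ hw => ⟨[], hw ▸ List.prefix_rfl, rfl, fun _ hu _ => hu⟩⟩

structure Stage (code : List Bool → ℕ) (F : (ℕ → ℕ) → ℕ → Bool) where
  σ : List ℕ
  v : List Bool
  fslTree : FSLTree (listedWords code σ)
  isLeaf : IsLeaf (listedWords code σ) v
  deltaS : DeltaS (F (extendZero σ)) v

namespace Stage

variable {code : List Bool → ℕ} {F : (ℕ → ℕ) → ℕ → Bool}

structure Next (s t : Stage code F) : Prop where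
  isPrefix : s.σ <+: t.σ
  length_lt : s.σ.length < t.σ.length
  tree_eq_sprout : listedWords code t.σ = sprout (listedWords code s.σ) s.v
  exists_snoc : ∃ b, t.v = s.v ++ [b]
  forces : ∀ q ∈ fslEnumerations code, q ∈ cylinder (extendZero t.σ) t.σ.length →
    ∀ w, DeltaS (F q) w → s.v <+: w

theorem exists_of_fslTree (hsol : SolvesFSL code F) {σ : List ℕ}
    (hσ : FSLTree (listedWords code σ)) : ∃ s : Stage code F, s.σ = σ := by
  obtain ⟨v, hv, hleaf⟩ := hsol _ _ hσ (enumeratesTree_extendZero code σ)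
  exact ⟨⟨σ, v, hσ, hleaf, hv⟩, rfl⟩

theorem exists_next (hcode : Function.Injective code)
    (hF : ContinuousOn F (fslEnumerations code)) (hsol : SolvesFSL code F) (s : Stage code F) :
    ∃ t, s.Next t := by
  obtain ⟨n, -, hn⟩ := s.deltaS
  obtain ⟨M, hM⟩ :=
    hF.exists_cylinder_mapsTo ⟨_, s.fslTree, enumeratesTree_extendZero code s.σ⟩ (2 * n)
  -- the zeros enumerate nothing; they only push the new codes past the modulus `M`
  set σ₁ := s.σ ++ List.replicate M 0
  set σ' := σ₁ ++ [code (s.v ++ [false]) + 1, code (s.v ++ [true]) + 1]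
  have hσ' : listedWords code σ' = sprout (listedWords code s.σ) s.v := by
    ext w
    simp [σ', σ₁, listedWords, sprout, hcode.eq_iff, eq_comm, or_comm, or_assoc]
  have hforces : ∀ q ∈ fslEnumerations code, q ∈ cylinder (extendZero σ') σ'.length →
      ∀ w, DeltaS (F q) w → s.v <+: w := by
    intro q hq hqσ w hw
    have hqM : q ∈ cylinder (extendZero s.σ) M := fun i hi => by
      rw [← extendZero_append_replicate s.σ M]
      exact (hqσ i (by simp [σ', σ₁]; omega)).trans
        (extendZero_mem_cylinder (List.prefix_append σ₁ _) i (by simp [σ₁]; omega))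
    exact DeltaS.prefix_of_mem_cylinder hn (hM q hq hqM) hw
  obtain ⟨t, ht⟩ := exists_of_fslTree hsol (hσ' ▸ s.fslTree.sprout s.isLeaf)
  have hvt : s.v <+: t.v :=
    hforces _ ⟨_, t.fslTree, ht ▸ enumeratesTree_extendZero _ _⟩ (ht ▸ self_mem_cylinder _ _) _
      t.deltaS
  refine ⟨t, ht ▸ (List.prefix_append _ _).trans (List.prefix_append _ _), by simp [ht, σ', σ₁],
    ht ▸ hσ', s.isLeaf.eq_snoc_of_sprout (hσ' ▸ ht ▸ t.isLeaf) hvt, ht ▸ hforces⟩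

end Stage

theorem FSL_not_continuous (code : List Bool → ℕ) (hcode : Function.Injective code) :
    ¬ ∃ F : (ℕ → ℕ) → (ℕ → Bool),
      ContinuousOn F {p | ∃ T, FSLTree T ∧ EnumeratesTree code p T} ∧
      ∀ (p : ℕ → ℕ) (T : Set (List Bool)), FSLTree T → EnumeratesTree code p T →
        ∃ w : List Bool, DeltaS (F p) w ∧ IsLeaf T w := by
  rintro ⟨F, hF, hsol⟩
  have hroot : listedWords code [code [] + 1] = {[]} := by
    ext w
    simp [listedWords, hcode.eq_iff]
  obtain ⟨s₀, -⟩ := Stage.exists_of_fslTree hsol (hroot ▸ fslTree_singleton_nil)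
  choose next hnext using Stage.exists_next hcode hF hsol
  set s : ℕ → Stage code F := fun k => next^[k] s₀
  have hs (k : ℕ) : (s k).Next (s (k + 1)) := by
    simpa only [s, Function.iterate_succ_apply'] using hnext (s k)
  have hσ : StrictMono fun k => (s k).σ.length :=
    strictMono_nat_of_lt_succ fun k => (hs k).length_lt
  set T := ⋃ k, listedWords code (s k).σ
  have hT : FSLTree T := fslTree_iUnion_of_sprout (s 0).fslTree (fun k => (s k).isLeaf)
    (fun k => (hs k).tree_eq_sprout) (fun k => (hs k).exists_snoc)
  have hp := enumeratesTree_limitSeq (fun k => (hs k).isPrefix) hσ code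
  obtain ⟨w, hw, -⟩ := hsol _ T hT hp
  have hvw (k : ℕ) : (s k).v <+: w :=
    (hs k).forces _ ⟨T, hT, hp⟩ (limitSeq_mem_cylinder (fun k => (hs k).isPrefix) hσ (k + 1)) w hw
  have hv : StrictMono fun k => (s k).v.length := strictMono_nat_of_lt_succ fun k => by
    obtain ⟨b, hb⟩ := (hs k).exists_snoc
    simp [hb]
  exact (hv.id_le (w.length + 1)).not_gt ((hvw _).length_le.trans_lt (Nat.lt_succ_self _))
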